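/- Let K be a compact Hausdorff space and H ⊆ C(K, K_C) a set containing all constant interval-valued functions, such that Conv(H) separates the points of K (for any s ≠ t in K there is φ ∈ Conv(H) with φ(s) ≠ φ(t)). Then H is dense in C(K, K_C) with respect to the supremum metric D_∞(f,g) = sup_{t∈K} d_H(f(t), g(t)). -/
import Mathlib


/-- The space `K_C` of nonempty compact intervals of `ℝ`, given by endpoints. -/
structure KC where
  lo : ℝ
  hi : ℝ
  isLe : lo ≤ hi

namespace KC

@[ext] theorem ext' {A B : KC} (h1 : A.lo = B.lo) (h2 : A.hi = B.hi) : A = B := by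
  cases A; cases B; simp_all

/-- Minkowski addition. -/
instance : Add KC := ⟨fun A B => ⟨A.lo + B.lo, A.hi + B.hi, add_le_add A.isLe B.isLe⟩⟩

instance : Zero KC := ⟨⟨0, 0, le_refl 0⟩⟩

/-- Scalar multiplication `λ·[a,b] = {λx : x ∈ [a,b]}`. -/
noncomputable instance : SMul ℝ KC :=
  ⟨fun c A => ⟨min (c * A.lo) (c * A.hi), max (c * A.lo) (c * A.hi), min_le_max⟩⟩

noncomputable instance : AddCommMonoid KC where
  add_assoc A B C := by ext <;> exact add_assoc _ _ _
  zero_add A := by ext <;> exact zero_add _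
  add_zero A := by ext <;> exact add_zero _
  add_comm A B := by ext <;> exact add_comm _ _
  nsmul := nsmulRec

/-- The Hausdorff metric on `K_C`: `d_H([a,b],[c,d]) = max {|a-c|, |b-d|}`. -/
noncomputable instance : MetricSpace KC where
  dist A B := max |A.lo - B.lo| |A.hi - B.hi|
  dist_self A := by simp
  dist_comm A B := by simp [abs_sub_comm]
  dist_triangle A B C := by
    apply max_le
    · calc |A.lo - C.lo| ≤ |A.lo - B.lo| + |B.lo - C.lo| := abs_sub_le _ _ _
        _ ≤ _ := add_le_add (le_max_left _ _) (le_max_left _ _)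
    · calc |A.hi - C.hi| ≤ |A.hi - B.hi| + |B.hi - C.hi| := abs_sub_le _ _ _
        _ ≤ _ := add_le_add (le_max_right _ _) (le_max_right _ _)
  eq_of_dist_eq_zero := by
    intro A B h
    have h1 : |A.lo - B.lo| = 0 :=
      le_antisymm (le_of_le_of_eq (le_max_left _ _) h) (abs_nonneg _)
    have h2 : |A.hi - B.hi| = 0 :=
      le_antisymm (le_of_le_of_eq (le_max_right _ _) h) (abs_nonneg _)
    ext
    · linarith [abs_eq_zero.mp h1]
    · linarith [abs_eq_zero.mp h2]

/-- The generalized Hukuhara difference. -/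
noncomputable def gH (A B : KC) : KC :=
  ⟨min (A.lo - B.lo) (A.hi - B.hi), max (A.lo - B.lo) (A.hi - B.hi), min_le_max⟩

/-- The length (diameter) of an interval. -/
def len (A : KC) : ℝ := A.hi - A.lo

end KC

/-- `Conv H`: continuous `[0,1]`-valued functions `φ` with `φf + (1-φ)g ∈ H` for all `f,g ∈ H`. -/
def Conv {K : Type*} [TopologicalSpace K] (H : Set C(K, KC)) : Set C(K, ℝ) :=
  {φ | (∀ k, φ k ∈ Set.Icc (0:ℝ) 1) ∧
    ∀ f ∈ H, ∀ g ∈ H, ∃ h ∈ H, ∀ k, h k = φ k • f k + (1 - φ k) • g k}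

namespace KC

-- new lemmas
theorem dist_eq (A B : KC) : dist A B = max |A.lo - B.lo| |A.hi - B.hi| := rfl

theorem add_lo (A B : KC) : (A + B).lo = A.lo + B.lo := rfl
theorem add_hi (A B : KC) : (A + B).hi = A.hi + B.hi := rfl

theorem smul_lo {c : ℝ} (hc : 0 ≤ c) (A : KC) : (c • A).lo = c * A.lo :=
  min_eq_left (mul_le_mul_of_nonneg_left A.isLe hc)
theorem smul_hi {c : ℝ} (hc : 0 ≤ c) (A : KC) : (c • A).hi = c * A.hi :=
  max_eq_right (mul_le_mul_of_nonneg_left A.isLe hc)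

theorem one_smul' (A : KC) : (1 : ℝ) • A = A := by
  ext
  · rw [smul_lo zero_le_one]; ring
  · rw [smul_hi zero_le_one]; ring

theorem zero_smul' (A : KC) : (0 : ℝ) • A = 0 := by
  ext
  · rw [smul_lo le_rfl]; simp; rfl
  · rw [smul_hi le_rfl]; simp; rfl

theorem comb_comb {a b : ℝ} (ha : a ∈ Set.Icc (0:ℝ) 1) (hb : b ∈ Set.Icc (0:ℝ) 1)
    (X Y : KC) :
    a • (b • X + (1 - b) • Y) + (1 - a) • Y = (a * b) • X + (1 - a * b) • Y := by
  obtain ⟨ha0, ha1⟩ := ha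
  obtain ⟨hb0, hb1⟩ := hb
  have h1a : (0:ℝ) ≤ 1 - a := by linarith
  have h1b : (0:ℝ) ≤ 1 - b := by linarith
  have hab : (0:ℝ) ≤ a * b := mul_nonneg ha0 hb0
  have hab1 : (0:ℝ) ≤ 1 - a * b := by nlinarith
  ext
  · rw [add_lo, add_lo, smul_lo ha0, smul_lo h1a, smul_lo hab, smul_lo hab1,
      add_lo, smul_lo hb0, smul_lo h1b]; ring
  · rw [add_hi, add_hi, smul_hi ha0, smul_hi h1a, smul_hi hab, smul_hi hab1,
      add_hi, smul_hi hb0, smul_hi h1b]; ring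

theorem dist_comb_le {p : ℝ} (hp0 : 0 ≤ p) (hp1 : p ≤ 1) (A B C : KC) :
    dist (p • A + (1 - p) • B) C ≤ p * dist A C + (1 - p) * dist B C := by
  have h1p : (0:ℝ) ≤ 1 - p := by linarith
  rw [dist_eq, dist_eq, dist_eq]
  apply max_le
  · rw [add_lo, smul_lo hp0, smul_lo h1p]
    calc |p * A.lo + (1 - p) * B.lo - C.lo|
        = |p * (A.lo - C.lo) + (1 - p) * (B.lo - C.lo)| := by ring_nf
      _ ≤ |p * (A.lo - C.lo)| + |(1 - p) * (B.lo - C.lo)| := abs_add_le _ _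
      _ = p * |A.lo - C.lo| + (1 - p) * |B.lo - C.lo| := by
          rw [abs_mul, abs_mul, abs_of_nonneg hp0, abs_of_nonneg h1p]
      _ ≤ p * max |A.lo - C.lo| |A.hi - C.hi| + (1 - p) * max |B.lo - C.lo| |B.hi - C.hi| :=
          add_le_add (mul_le_mul_of_nonneg_left (le_max_left _ _) hp0)
            (mul_le_mul_of_nonneg_left (le_max_left _ _) h1p)
  · rw [add_hi, smul_hi hp0, smul_hi h1p]
    calc |p * A.hi + (1 - p) * B.hi - C.hi|
        = |p * (A.hi - C.hi) + (1 - p) * (B.hi - C.hi)| := by ring_nf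
      _ ≤ |p * (A.hi - C.hi)| + |(1 - p) * (B.hi - C.hi)| := abs_add_le _ _
      _ = p * |A.hi - C.hi| + (1 - p) * |B.hi - C.hi| := by
          rw [abs_mul, abs_mul, abs_of_nonneg hp0, abs_of_nonneg h1p]
      _ ≤ p * max |A.lo - C.lo| |A.hi - C.hi| + (1 - p) * max |B.lo - C.lo| |B.hi - C.hi| :=
          add_le_add (mul_le_mul_of_nonneg_left (le_max_right _ _) hp0)
            (mul_le_mul_of_nonneg_left (le_max_right _ _) h1p)

end KC

-- Jewett numeric lemma
theorem jewett {a b δ : ℝ} (ha : 0 ≤ a) (hab : a < b) (hb : b ≤ 1) (hδ : 0 < δ) :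
    ∃ n m : ℕ, 1 ≤ n ∧ 1 ≤ m ∧ 1 - δ ≤ (1 - a ^ n) ^ m ∧ (1 - b ^ n) ^ m ≤ δ := by
  have hb0 : 0 < b := lt_of_le_of_lt ha hab
  set r : ℝ := a / b with hr
  have hr0 : 0 ≤ r := div_nonneg ha hb0.le
  have hr1 : r < 1 := (div_lt_one hb0).mpr hab
  have har : a ≤ r := by
    rw [hr, le_div_iff₀ hb0]; nlinarith
  set N : ℕ := ⌈1 / δ⌉₊ with hN
  obtain ⟨n₀, hn₀⟩ := exists_pow_lt_of_lt_one
    (show (0:ℝ) < δ / (2 * (N + 1)) by positivity) hr1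
  set n : ℕ := n₀ + 1 with hn
  have hrn : r ^ n ≤ δ / (2 * (N + 1)) := by
    calc r ^ n = r ^ n₀ * r := pow_succ r n₀
      _ ≤ r ^ n₀ * 1 := by
          apply mul_le_mul_of_nonneg_left hr1.le (pow_nonneg hr0 _)
      _ = r ^ n₀ := mul_one _
      _ ≤ δ / (2 * (N + 1)) := hn₀.le
  have hbn0 : 0 < b ^ n := pow_pos hb0 n
  have hbn1 : b ^ n ≤ 1 := pow_le_one₀ hb0.le hb
  set m : ℕ := ⌈((N : ℝ) + 1) / b ^ n⌉₊ with hm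
  have hmlb : ((N : ℝ) + 1) / b ^ n ≤ m := Nat.le_ceil _
  have hmub : (m : ℝ) ≤ ((N : ℝ) + 1) / b ^ n + 1 :=
    (Nat.ceil_lt_add_one (by positivity)).le
  have hm1 : 1 ≤ m := by
    rw [hm, Nat.one_le_ceil_iff]; positivity
  have hman : (m : ℝ) * a ^ n ≤ δ := by
    have h1 : a ^ n ≤ r ^ n := pow_le_pow_left₀ ha har n
    have h2 : (m : ℝ) * a ^ n ≤ (((N:ℝ) + 1) / b ^ n + 1) * a ^ n :=
      mul_le_mul_of_nonneg_right hmub (pow_nonneg ha n)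
    have h3 : (((N:ℝ) + 1) / b ^ n + 1) * a ^ n
        = ((N:ℝ) + 1) * (a ^ n / b ^ n) + a ^ n := by ring
    have h4 : a ^ n / b ^ n = (a / b) ^ n := (div_pow a b n).symm
    have h5 : ((N:ℝ) + 1) * r ^ n + r ^ n ≤ (2 * ((N:ℝ)+1)) * r ^ n := by nlinarith [pow_nonneg hr0 n]
    have h6 : (2 * ((N:ℝ)+1)) * r ^ n ≤ δ := by
      rw [mul_comm]
      exact (le_div_iff₀ (by positivity)).mp hrn
    calc (m : ℝ) * a ^ n ≤ ((N:ℝ) + 1) * (a ^ n / b ^ n) + a ^ n := by linarith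
      _ = ((N:ℝ) + 1) * r ^ n + a ^ n := by rw [h4, hr]
      _ ≤ ((N:ℝ) + 1) * r ^ n + r ^ n := by linarith
      _ ≤ δ := le_trans h5 h6
  refine ⟨n, m, Nat.le_add_left 1 n₀, hm1, ?_, ?_⟩
  · -- 1 - δ ≤ (1 - a^n)^m
    have han1 : a ^ n ≤ 1 := le_trans (pow_le_pow_left₀ ha har n) (pow_le_one₀ hr0 hr1.le)
    have := one_add_mul_le_pow (a := -a ^ n) (by nlinarith [pow_nonneg ha n]) m
    have h : 1 + (m : ℝ) * (-a ^ n) ≤ (1 - a ^ n) ^ m := by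
      simpa [sub_eq_add_neg] using this
    nlinarith
  · -- (1 - b^n)^m ≤ δ
    set c : ℝ := b ^ n with hc
    have hcm : (1 : ℝ) / δ ≤ c * m := by
      have h1 : ((N:ℝ) + 1) ≤ c * m := by
        rw [mul_comm]
        calc ((N:ℝ) + 1) = (((N:ℝ) + 1) / c) * c := by field_simp
          _ ≤ (m : ℝ) * c := mul_le_mul_of_nonneg_right hmlb hbn0.le
      have h2 : (1:ℝ) / δ ≤ (N:ℝ) + 1 := by
        have := Nat.le_ceil (1 / δ)
        push_cast
        push_cast at this
        linarith
      linarith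
    have key : (1 - c) ^ m * (1 + c * m) ≤ 1 := by
      have h1 : 1 + (m:ℝ) * c ≤ (1 + c) ^ m := one_add_mul_le_pow (by linarith) m
      have h2 : (0:ℝ) ≤ (1 - c) ^ m := pow_nonneg (by linarith) m
      calc (1 - c) ^ m * (1 + c * m) ≤ (1 - c) ^ m * (1 + c) ^ m := by
            apply mul_le_mul_of_nonneg_left _ h2
            rw [mul_comm c (m:ℝ)]; exact h1
        _ = ((1 - c) * (1 + c)) ^ m := (mul_pow _ _ _).symm
        _ = (1 - c ^ 2) ^ m := by ring_nf
        _ ≤ 1 := pow_le_one₀ (by nlinarith) (by nlinarith)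
    have hpos : (0:ℝ) < 1 + c * m := by positivity
    have h3 : (1 - c) ^ m ≤ 1 / (1 + c * m) := by
      rw [le_div_iff₀ hpos]; exact key
    have h4 : 1 / (1 + c * m) ≤ δ := by
      rw [div_le_iff₀ hpos]
      have : (1:ℝ) ≤ δ * (c * m) := by
        calc (1:ℝ) = δ * (1/δ) := by field_simp
          _ ≤ δ * (c * m) := mul_le_mul_of_nonneg_left hcm hδ.le
      nlinarith
    linarith

namespace Conv

variable {K : Type*} [TopologicalSpace K] {H : Set C(K, KC)}

theorem one_mem : (1 : C(K, ℝ)) ∈ Conv H := by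
  refine ⟨fun k => by simp, fun f hf g hg => ⟨f, hf, fun k => ?_⟩⟩
  simp [KC.one_smul', KC.zero_smul']

theorem zero_mem : (0 : C(K, ℝ)) ∈ Conv H := by
  refine ⟨fun k => by simp, fun f hf g hg => ⟨g, hg, fun k => ?_⟩⟩
  simp [KC.one_smul', KC.zero_smul']

theorem one_sub_mem {φ : C(K, ℝ)} (hφ : φ ∈ Conv H) : 1 - φ ∈ Conv H := by
  obtain ⟨hI, hφ⟩ := hφ
  refine ⟨fun k => ?_, fun f hf g hg => ?_⟩
  · obtain ⟨h0, h1⟩ := hI k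
    simp only [ContinuousMap.sub_apply, ContinuousMap.one_apply, Set.mem_Icc]
    constructor <;> linarith
  · obtain ⟨h, hh, he⟩ := hφ g hg f hf
    refine ⟨h, hh, fun k => ?_⟩
    rw [he k]
    simp only [ContinuousMap.sub_apply, ContinuousMap.one_apply, sub_sub_cancel]
    exact add_comm _ _

theorem mul_mem {φ ψ : C(K, ℝ)} (hφ : φ ∈ Conv H) (hψ : ψ ∈ Conv H) :
    φ * ψ ∈ Conv H := by
  refine ⟨fun k => ?_, fun f hf g hg => ?_⟩
  · obtain ⟨h0, h1⟩ := hφ.1 k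
    obtain ⟨h0', h1'⟩ := hψ.1 k
    exact ⟨mul_nonneg h0 h0', mul_le_one₀ h1 h0' h1'⟩
  · obtain ⟨h₁, hh₁, e₁⟩ := hψ.2 f hf g hg
    obtain ⟨h₂, hh₂, e₂⟩ := hφ.2 h₁ hh₁ g hg
    refine ⟨h₂, hh₂, fun k => ?_⟩
    rw [e₂ k, e₁ k, ContinuousMap.mul_apply]
    exact KC.comb_comb (hφ.1 k) (hψ.1 k) (f k) (g k)

theorem pow_mem {φ : C(K, ℝ)} (hφ : φ ∈ Conv H) (n : ℕ) : φ ^ n ∈ Conv H := by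
  induction n with
  | zero => simpa using one_mem
  | succ n ih => rw [pow_succ]; exact mul_mem ih hφ

theorem prod_mem {ι : Type*} (s : Finset ι) (φ : ι → C(K, ℝ))
    (h : ∀ i ∈ s, φ i ∈ Conv H) : (∏ i ∈ s, φ i) ∈ Conv H :=
  Finset.prod_induction φ (· ∈ Conv H) (fun _ _ => mul_mem) one_mem h

end Conv

-- monotonicity of the Jewett polynomial
theorem jewett_antitone {n m : ℕ} {s t : ℝ} (hs : 0 ≤ s) (hst : s ≤ t) (ht : t ≤ 1) :
    (1 - t ^ n) ^ m ≤ (1 - s ^ n) ^ m := by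
  have h1 : t ^ n ≤ 1 := pow_le_one₀ (hs.trans hst) ht
  have h2 : s ^ n ≤ t ^ n := pow_le_pow_left₀ hs hst n
  exact pow_le_pow_left₀ (by linarith) (by linarith) m

theorem prod_lb {ι : Type*} (s : Finset ι) (v : ι → ℝ) {δ : ℝ} (hδ : 0 ≤ δ)
    (h : ∀ i ∈ s, 1 - δ ≤ v i ∧ 0 ≤ v i ∧ v i ≤ 1) :
    1 - s.card * δ ≤ ∏ i ∈ s, v i := by
  classical
  induction s using Finset.cons_induction with
  | empty => simp
  | cons a s ha ih =>
    rw [Finset.prod_cons, Finset.card_cons]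
    obtain ⟨h1, h2, h3⟩ := h a (Finset.mem_cons_self a s)
    have ih' := ih (fun i hi => h i (Finset.mem_cons_of_mem hi))
    have hp0 : (0:ℝ) ≤ ∏ i ∈ s, v i :=
      Finset.prod_nonneg (fun i hi => (h i (Finset.mem_cons_of_mem hi)).2.1)
    have hp1 : (∏ i ∈ s, v i) ≤ 1 :=
      Finset.prod_le_one (fun i hi => (h i (Finset.mem_cons_of_mem hi)).2.1)
        (fun i hi => (h i (Finset.mem_cons_of_mem hi)).2.2)
    push_cast
    nlinarith [mul_nonneg (sub_nonneg.mpr h1) hp0]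

theorem prod_le_of_mem {ι : Type*} (s : Finset ι) (v : ι → ℝ)
    (h : ∀ i ∈ s, 0 ≤ v i ∧ v i ≤ 1) {j : ι} (hj : j ∈ s) : ∏ i ∈ s, v i ≤ v j := by
  classical
  rw [← Finset.mul_prod_erase s v hj]
  have h1 : ∏ i ∈ s.erase j, v i ≤ 1 :=
    Finset.prod_le_one (fun i hi => (h i (Finset.mem_of_mem_erase hi)).1)
      (fun i hi => (h i (Finset.mem_of_mem_erase hi)).2)
  calc v j * ∏ i ∈ s.erase j, v i ≤ v j * 1 :=
        mul_le_mul_of_nonneg_left h1 (h j hj).1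
    _ = v j := mul_one _

section Bump

variable {K : Type*} [TopologicalSpace K] [CompactSpace K] [T2Space K] {H : Set C(K, KC)}
variable (hsep : ∀ s t : K, s ≠ t → ∃ φ ∈ Conv H, φ s ≠ φ t)

theorem bump_two_aux {φ₀ : C(K, ℝ)} (hφ₀ : φ₀ ∈ Conv H) {x y : K} (hlt : φ₀ y < φ₀ x)
    {δ : ℝ} (hδ : 0 < δ) : ∃ φ ∈ Conv H, 1 - δ ≤ φ x ∧ φ y ≤ δ := by
  obtain ⟨ha, _⟩ := hφ₀.1 y
  obtain ⟨_, hb⟩ := hφ₀.1 x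
  obtain ⟨n, m, hn, hm, hJ1, hJ2⟩ := jewett ha hlt hb hδ
  refine ⟨1 - (1 - φ₀ ^ n) ^ m,
    Conv.one_sub_mem (Conv.pow_mem (Conv.one_sub_mem (Conv.pow_mem hφ₀ n)) m), ?_, ?_⟩
  · simp only [ContinuousMap.sub_apply, ContinuousMap.one_apply, ContinuousMap.pow_apply]
    linarith
  · simp only [ContinuousMap.sub_apply, ContinuousMap.one_apply, ContinuousMap.pow_apply]
    linarith

include hsep in
theorem bump_two {x y : K} (hxy : x ≠ y) {δ : ℝ} (hδ : 0 < δ) :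
    ∃ φ ∈ Conv H, 1 - δ ≤ φ x ∧ φ y ≤ δ := by
  obtain ⟨φ₀, hφ₀, hne⟩ := hsep x y hxy
  rcases lt_or_gt_of_ne hne with hlt | hgt
  · -- φ₀ x < φ₀ y : use 1 - φ₀
    have : (1 - φ₀) y < (1 - φ₀) x := by
      simp only [ContinuousMap.sub_apply, ContinuousMap.one_apply]; linarith
    exact bump_two_aux (Conv.one_sub_mem hφ₀) this hδ
  · exact bump_two_aux hφ₀ hgt hδ

include hsep in
theorem bump_point_set {x : K} {B : Set K} (hB : IsClosed B) (hxB : x ∉ B)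
    {δ : ℝ} (hδ : 0 < δ) : ∃ φ ∈ Conv H, 1 - δ ≤ φ x ∧ ∀ t ∈ B, φ t ≤ δ := by
  classical
  have hxy : ∀ y : B, x ≠ (y : K) := fun y h => hxB (h ▸ y.2)
  choose φ hφM hφx hφy using fun y : B =>
    bump_two hsep (hxy y) (show (0:ℝ) < 1/4 by norm_num)
  have hcov : B ⊆ ⋃ y : B, {t | φ y t < 1/2} := by
    intro t ht
    exact Set.mem_iUnion.mpr ⟨⟨t, ht⟩, by simpa using lt_of_le_of_lt (hφy ⟨t, ht⟩) (by norm_num)⟩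
  obtain ⟨s, hs⟩ := hB.isCompact.elim_finite_subcover _
    (fun y : B => isOpen_lt (φ y).continuous continuous_const) hcov
  set δ' : ℝ := δ / (s.card + 1) with hδ'def
  have hδ'0 : 0 < δ' := by positivity
  obtain ⟨n, m, hn, hm, hJ1, hJ2⟩ :=
    jewett (a := 1/2) (b := 3/4) (by norm_num) (by norm_num) (by norm_num) hδ'0
  set χ : B → C(K, ℝ) := fun y => 1 - (1 - φ y ^ n) ^ m with hχdef
  have hχM : ∀ y, χ y ∈ Conv H := fun y =>
    Conv.one_sub_mem (Conv.pow_mem (Conv.one_sub_mem (Conv.pow_mem (hφM y) n)) m)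
  have hχeval : ∀ y u, χ y u = 1 - (1 - φ y u ^ n) ^ m := by
    intro y u
    simp [hχdef]
  have hχx : ∀ y, 1 - δ' ≤ χ y x := by
    intro y
    rw [hχeval]
    have h1 : (1 - (φ y x) ^ n) ^ m ≤ (1 - ((3:ℝ)/4) ^ n) ^ m :=
      jewett_antitone (by norm_num) (by linarith [hφx y]) ((hφM y).1 x).2
    linarith
  have hχsmall : ∀ y t, φ y t < 1/2 → χ y t ≤ δ' := by
    intro y t hlt
    rw [hχeval]
    have h1 : (1 - ((1:ℝ)/2) ^ n) ^ m ≤ (1 - (φ y t) ^ n) ^ m :=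
      jewett_antitone ((hφM y).1 t).1 hlt.le (by norm_num)
    linarith
  refine ⟨∏ y ∈ s, χ y, Conv.prod_mem _ _ (fun y _ => hχM y), ?_, ?_⟩
  · rw [ContinuousMap.prod_apply]
    have h1 : 1 - s.card * δ' ≤ ∏ y ∈ s, χ y x :=
      prod_lb s _ hδ'0.le (fun y _ => ⟨hχx y, ((hχM y).1 x).1, ((hχM y).1 x).2⟩)
    have h2 : (s.card : ℝ) * δ' ≤ δ := by
      rw [hδ'def, ← mul_div_assoc, div_le_iff₀ (by positivity)]
      nlinarith [hδ.le, Nat.cast_nonneg (α := ℝ) s.card]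
    linarith
  · intro t ht
    obtain ⟨y, hy, hyt⟩ : ∃ y ∈ s, φ y t < 1/2 := by
      have := hs ht
      simp only [Set.mem_iUnion] at this
      obtain ⟨y, hy, hmem⟩ := this
      exact ⟨y, hy, hmem⟩
    rw [ContinuousMap.prod_apply]
    calc ∏ z ∈ s, χ z t ≤ χ y t :=
          prod_le_of_mem s _ (fun z _ => ⟨((hχM z).1 t).1, ((hχM z).1 t).2⟩) hy
      _ ≤ δ' := hχsmall y t hyt
      _ ≤ δ := by
          rw [hδ'def]
          rw [div_le_iff₀ (by positivity)]
          nlinarith [hδ.le, Nat.cast_nonneg (α := ℝ) s.card]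

include hsep in
theorem bump_set_set {A B : Set K} (hA : IsClosed A) (hB : IsClosed B)
    (hAB : ∀ t ∈ A, t ∉ B) {δ : ℝ} (hδ : 0 < δ) :
    ∃ φ ∈ Conv H, (∀ t ∈ A, 1 - δ ≤ φ t) ∧ (∀ t ∈ B, φ t ≤ δ) := by
  classical
  choose φ hφM hφa hφB using fun a : A =>
    bump_point_set hsep hB (hAB a a.2) (show (0:ℝ) < 1/4 by norm_num)
  have hcov : A ⊆ ⋃ a : A, {t | 1/2 < φ a t} := by
    intro t ht
    refine Set.mem_iUnion.mpr ⟨⟨t, ht⟩, ?_⟩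
    have := hφa ⟨t, ht⟩
    simp only [Set.mem_setOf_eq]
    linarith
  obtain ⟨s, hs⟩ := hA.isCompact.elim_finite_subcover _
    (fun a : A => isOpen_lt continuous_const (φ a).continuous) hcov
  set δ' : ℝ := δ / (s.card + 1) with hδ'def
  have hδ'0 : 0 < δ' := by positivity
  obtain ⟨n, m, hn, hm, hJ1, hJ2⟩ :=
    jewett (a := 1/4) (b := 1/2) (by norm_num) (by norm_num) (by norm_num) hδ'0
  set χ : A → C(K, ℝ) := fun a => 1 - (1 - φ a ^ n) ^ m with hχdef
  have hχM : ∀ a, χ a ∈ Conv H := fun a =>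
    Conv.one_sub_mem (Conv.pow_mem (Conv.one_sub_mem (Conv.pow_mem (hφM a) n)) m)
  have hχeval : ∀ a u, χ a u = 1 - (1 - φ a u ^ n) ^ m := by
    intro a u; simp [hχdef]
  have hχbig : ∀ a t, 1/2 ≤ φ a t → 1 - δ' ≤ χ a t := by
    intro a t hat
    rw [hχeval]
    have h1 : (1 - (φ a t) ^ n) ^ m ≤ (1 - ((1:ℝ)/2) ^ n) ^ m :=
      jewett_antitone (by norm_num) hat ((hφM a).1 t).2
    linarith
  have hχB : ∀ a, ∀ t ∈ B, χ a t ≤ δ' := by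
    intro a t ht
    rw [hχeval]
    have h1 : (1 - ((1:ℝ)/4) ^ n) ^ m ≤ (1 - (φ a t) ^ n) ^ m :=
      jewett_antitone ((hφM a).1 t).1 (hφB a t ht) (by norm_num)
    linarith
  have hδ'le : δ' ≤ δ := by
    rw [hδ'def, div_le_iff₀ (by positivity)]
    nlinarith [hδ.le, Nat.cast_nonneg (α := ℝ) s.card]
  have hcard : (s.card : ℝ) * δ' ≤ δ := by
    rw [hδ'def, ← mul_div_assoc, div_le_iff₀ (by positivity)]
    nlinarith [hδ.le, Nat.cast_nonneg (α := ℝ) s.card]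
  refine ⟨1 - ∏ a ∈ s, (1 - χ a),
    Conv.one_sub_mem (Conv.prod_mem _ _ (fun a _ => Conv.one_sub_mem (hχM a))), ?_, ?_⟩
  · intro t ht
    obtain ⟨a, ha, hat⟩ : ∃ a ∈ s, 1/2 < φ a t := by
      have := hs ht
      simp only [Set.mem_iUnion] at this
      obtain ⟨a, ha, hmem⟩ := this
      exact ⟨a, ha, hmem⟩
    have key : ∏ z ∈ s, (1 - (χ z) t) ≤ δ' := by
      calc ∏ z ∈ s, (1 - (χ z) t) ≤ 1 - (χ a) t := by
            refine prod_le_of_mem s _ (fun z _ => ?_) ha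
            have := (hχM z).1 t
            exact ⟨by linarith [this.2], by linarith [this.1]⟩
        _ ≤ δ' := by have := hχbig a t hat.le; linarith
    simp only [ContinuousMap.sub_apply, ContinuousMap.one_apply, ContinuousMap.prod_apply]
    linarith [hδ'0.le, hδ'le]
  · intro t ht
    have key : 1 - s.card * δ' ≤ ∏ a ∈ s, (1 - (χ a) t) := by
      apply prod_lb s _ hδ'0.le
      intro a _
      have h1 := hχB a t ht
      have h2 := (hχM a).1 t
      exact ⟨by linarith [h2.1], by linarith [h2.2], by linarith [h2.1]⟩
    simp only [ContinuousMap.sub_apply, ContinuousMap.one_apply, ContinuousMap.prod_apply]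
    linarith

end Bump

theorem stone_weierstrass_interval {K : Type*} [TopologicalSpace K] [CompactSpace K] [T2Space K]
    (H : Set C(K, KC))
    (hconst : ∀ J : KC, (ContinuousMap.const K J) ∈ H)
    (hsep : ∀ s t : K, s ≠ t → ∃ φ ∈ Conv H, φ s ≠ φ t) :
    Dense H := by
  rw [Metric.dense_iff]
  intro f ε hε
  by_cases hK : Nonempty K
  swap
  · have hK' : IsEmpty K := not_nonempty_iff.mp hK
    refine ⟨ContinuousMap.const K ⟨0, 0, le_rfl⟩, ?_, hconst _⟩
    rw [Metric.mem_ball, ContinuousMap.dist_lt_iff hε]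
    exact fun x => (hK'.false x).elim
  obtain ⟨C, hC⟩ := Metric.isBounded_iff.mp (isCompact_range f.continuous).isBounded
  set R : ℝ := max C 0 with hRdef
  have hR0 : 0 ≤ R := le_max_right _ _
  have hfR : ∀ u v : K, dist (f u) (f v) ≤ R := fun u v =>
    le_trans (hC (Set.mem_range_self u) (Set.mem_range_self v)) (le_max_left _ _)
  set ε₁ : ℝ := ε / 4 with hε₁def
  have hε₁ : 0 < ε₁ := by positivity
  have hcov : (Set.univ : Set K) ⊆ ⋃ t : K, {u | dist (f t) (f u) < ε₁} := fun t _ =>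
    Set.mem_iUnion.mpr ⟨t, by simpa using hε₁⟩
  obtain ⟨T, hT⟩ := isCompact_univ.elim_finite_subcover _
    (fun t : K => isOpen_lt (continuous_const.dist f.continuous) continuous_const) hcov
  set κ : ℝ := ε₁ / (T.card + 1) with hκdef
  have hκ0 : 0 < κ := by positivity
  have hκε₁ : (T.card : ℝ) * κ ≤ ε₁ := by
    rw [hκdef, ← mul_div_assoc, div_le_iff₀ (by positivity)]
    nlinarith [hε₁.le, Nat.cast_nonneg (α := ℝ) T.card]
  set δ : ℝ := κ / (R + 1) with hδdef
  have hδ0 : 0 < δ := by positivity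
  have hδR : δ * R < κ := by
    rw [hδdef, div_mul_eq_mul_div, div_lt_iff₀ (by positivity)]
    nlinarith
  set D : K → Set K := fun t => {u | dist (f t) (f u) ≤ ε₁} with hDdef
  have hDclosed : ∀ t, IsClosed (D t) :=
    fun t => isClosed_le (continuous_const.dist f.continuous) continuous_const
  have claim : ∀ s : Finset K, ∃ g ∈ H, (∀ u, dist (g u) (f u) ≤ R) ∧
      ∀ u ∈ ⋃ t ∈ s, D t, dist (g u) (f u) < 2 * ε₁ + s.card * κ := by
    intro s
    induction s using Finset.cons_induction with
    | empty =>
      obtain ⟨t₀⟩ := hK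
      exact ⟨ContinuousMap.const K (f t₀), hconst _,
        fun u => by simpa using hfR t₀ u, by simp⟩
    | cons a s ha ih =>
      obtain ⟨g, hgH, hgR, hggood⟩ := ih
      set W : Set K := {u | dist (g u) (f u) < 2 * ε₁ + s.card * κ} with hWdef
      have hWopen : IsOpen W := isOpen_lt (g.continuous.dist f.continuous) continuous_const
      have hA'closed : IsClosed (D a ∩ Wᶜ) := (hDclosed a).inter hWopen.isClosed_compl
      have hB'closed : IsClosed {u | dist (f a) (f u) < 2 * ε₁}ᶜ :=
        (isOpen_lt (continuous_const.dist f.continuous) continuous_const).isClosed_compl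
      have hdisj : ∀ u ∈ D a ∩ Wᶜ, u ∉ ({u | dist (f a) (f u) < 2 * ε₁}ᶜ : Set K) := by
        intro u hu hmem
        have h1 : dist (f a) (f u) ≤ ε₁ := hu.1
        exact hmem (by simp only [Set.mem_setOf_eq]; linarith)
      obtain ⟨φ, hφM, hφA, hφB⟩ := bump_set_set hsep hA'closed hB'closed hdisj hδ0
      obtain ⟨g', hg'H, hg'eq⟩ := hφM.2 (ContinuousMap.const K (f a)) (hconst _) g hgH
      have hbound : ∀ u, dist (g' u) (f u) ≤
          φ u * dist (f a) (f u) + (1 - φ u) * dist (g u) (f u) := by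
        intro u
        rw [hg'eq u, ContinuousMap.const_apply]
        exact KC.dist_comb_le (hφM.1 u).1 (hφM.1 u).2 (f a) (g u) (f u)
      refine ⟨g', hg'H, fun u => ?_, fun u hu => ?_⟩
      · have hb := hbound u
        have hp := hφM.1 u
        have h1 := hfR a u
        have h2 := hgR u
        nlinarith [hp.1, hp.2, dist_nonneg (x := f a) (y := f u),
          dist_nonneg (x := g u) (y := f u)]
      · rw [Finset.card_cons]
        push_cast
        have hb := hbound u
        have hp := hφM.1 u
        have hd1R : dist (f a) (f u) ≤ R := hfR a u
        have hd2R : dist (g u) (f u) ≤ R := hgR u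
        have hd1nn : (0:ℝ) ≤ dist (f a) (f u) := dist_nonneg
        have hd2nn : (0:ℝ) ≤ dist (g u) (f u) := dist_nonneg
        have hscard : (0:ℝ) ≤ (s.card : ℝ) := Nat.cast_nonneg _
        by_cases hW : u ∈ W
        · have hgW : dist (g u) (f u) < 2 * ε₁ + s.card * κ := hW
          by_cases hU : dist (f a) (f u) < 2 * ε₁
          · nlinarith [mul_le_mul_of_nonneg_left hU.le hp.1,
              mul_le_mul_of_nonneg_left hgW.le (by linarith [hp.2] : (0:ℝ) ≤ 1 - φ u),
              mul_nonneg hp.1 (mul_nonneg hscard hκ0.le)]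
          · have hφu : φ u ≤ δ := hφB u (by simpa using hU)
            nlinarith [mul_le_mul hφu hd1R hd1nn hδ0.le,
              mul_nonneg hp.1 hd2nn]
        · have huDa : u ∈ D a := by
            simp only [Set.mem_iUnion, Finset.mem_cons] at hu
            obtain ⟨t, ht | ht, htu⟩ := hu
            · exact ht ▸ htu
            · exact absurd (hggood u (Set.mem_iUnion₂.mpr ⟨t, ht, htu⟩)) hW
          have hφu : 1 - δ ≤ φ u := hφA u ⟨huDa, hW⟩
          have hda : dist (f a) (f u) ≤ ε₁ := huDa
          nlinarith [mul_le_mul (by linarith [hp.1] : 1 - φ u ≤ δ) hd2R hd2nn hδ0.le,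
            mul_nonneg (by linarith [hp.2] : (0:ℝ) ≤ 1 - φ u) hd1nn]
  obtain ⟨g, hgH, _, hggood⟩ := claim T
  refine ⟨g, ?_, hgH⟩
  rw [Metric.mem_ball, ContinuousMap.dist_lt_iff hε]
  intro u
  have hu : u ∈ ⋃ t ∈ T, D t := by
    obtain ⟨t, ht, htu⟩ := Set.mem_iUnion₂.mp (hT (Set.mem_univ u))
    refine Set.mem_iUnion₂.mpr ⟨t, ht, ?_⟩
    show dist (f t) (f u) ≤ ε₁
    exact le_of_lt htu
  have h1 := hggood u hu
  have : (2:ℝ) * ε₁ + T.card * κ ≤ 3 * ε₁ := by linarith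
  calc dist (g u) (f u) < 2 * ε₁ + T.card * κ := h1
    _ ≤ 3 * ε₁ := this
    _ < ε := by rw [hε₁def]; linarith
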